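/- Let g ∈ F_2[X] be a product of distinct irreducible polynomials g_1, ..., g_e of degrees d_1 ≤ d_2 ≤ ... ≤ d_e, dividing X^n - 1, where g_1 is irreducible but not primitive (its order is strictly less than 2^{d_1} - 1). Then the burst-covering radius b of the cyclic code generated by g, defined as b = max_{f ≠ 0, deg f < r} min_{k≥0} deg(X^k f mod g) + 1 with r = deg g, satisfies b ≥ r - d_1 + 2. -/

import Mathlib

/-! Write `G = h * g₀` with `g₀ = g 0` of degree `d`, and let `x` be the root of `g₀` in
`K = 𝔽₂[X]/(g₀)`, a field with `2^d` elements. As `x` is not primitive, some `y ∈ Kˣ` lies outside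
`⟨x⟩`, i.e. `x^k * y ∉ {0, 1} = 𝔽₂` for all `k`. Lifting `y` to `u` with `deg u < d` and taking
`f = h * u`, we get `X^k f mod G = h * (X^k u mod g₀)`, and `X^k u mod g₀` represents `x^k y`, so it
is not a constant. Every shift of `f` therefore has degree at least `deg h + 1 = r - d + 1`
modulo `G`. -/

open Polynomial

theorem exists_forall_pow_mul_ne_one_of_orderOf_lt {G : Type*} [Group G] [Finite G] {x : G}
    (hx : orderOf x < Nat.card G) : ∃ y : G, ∀ k : ℕ, x ^ k * y ≠ 1 := by
  by_contra! h
  refine hx.ne (orderOf_eq_card_of_forall_mem_zpowers fun y ↦ ?_)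
  obtain ⟨k, hk⟩ := h y
  rw [eq_inv_of_mul_eq_one_right hk]
  exact inv_mem (pow_mem (Subgroup.mem_zpowers x) k)

namespace Polynomial

variable {F : Type*} [Field F]

theorem mul_mod_mul_left (h a g : F[X]) : h * a % (h * g) = h * (a % g) := by
  rcases eq_or_ne h 0 with rfl | hh
  · simp
  rcases eq_or_ne g 0 with rfl | hg
  · simp
  have hdvd : h * g ∣ h * a - h * (a % g) :=
    ⟨a / g, by rw [EuclideanDomain.mod_eq_sub_mul_div a g]; ring⟩
  rw [mod_eq_of_dvd_sub hdvd, mod_eq_self_iff (mul_ne_zero hh hg), degree_mul, degree_mul]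
  exact (WithBot.add_lt_add_iff_left (degree_ne_bot.mpr hh)).mpr (degree_mod_lt a hg)

end Polynomial

namespace AdjoinRoot

variable {F : Type*} [Field F]

theorem mk_mod (f p : F[X]) : mk f (p % f) = mk f p :=
  mk_eq_mk.mpr ⟨-(p / f), by rw [EuclideanDomain.mod_eq_sub_mul_div p f]; ring⟩

theorem one_le_natDegree_mod_of_mk_notMem_range {f p : F[X]}
    (hp : mk f p ∉ Set.range (algebraMap F (AdjoinRoot f))) : 1 ≤ (p % f).natDegree := by
  by_contra! h
  obtain ⟨c, hc⟩ := natDegree_eq_zero.mp (Nat.lt_one_iff.mp h)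
  refine hp ⟨c, ?_⟩
  rw [← mk_mod, ← hc, mk_C]
  rfl

theorem root_pow_eq_one_of_dvd {f : F[X]} {n : ℕ} (hf : f ∣ X ^ n - 1) : root f ^ n = 1 := by
  rw [← sub_eq_zero, ← mk_X, ← map_pow, ← map_one (mk f), ← map_sub]
  exact mk_eq_zero.mpr hf

theorem natCard_eq_pow_natDegree [Finite F] {f : F[X]} (hf : f ≠ 0) :
    Nat.card (AdjoinRoot f) = Nat.card F ^ f.natDegree := by
  have := (powerBasis hf).finite
  rw [Module.natCard_eq_pow_finrank (K := F), (powerBasis hf).finrank, powerBasis_dim]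

theorem exists_forall_root_pow_mul_ne_zero_ne_one [Finite F] {f : F[X]} (hf : Irreducible f)
    {n : ℕ} (hn : 0 < n) (hn_lt : n < Nat.card F ^ f.natDegree - 1) (hdvd : f ∣ X ^ n - 1) :
    ∃ y : AdjoinRoot f, ∀ k : ℕ, root f ^ k * y ≠ 0 ∧ root f ^ k * y ≠ 1 := by
  have := Fact.mk hf
  have := (powerBasis hf.ne_zero).finite
  have : Finite (AdjoinRoot f) := Module.finite_of_finite F
  have hroot := root_pow_eq_one_of_dvd hdvd
  set x : (AdjoinRoot f)ˣ := .ofPowEqOne _ n hroot hn.ne'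
  have hx : orderOf x < Nat.card (AdjoinRoot f)ˣ := by
    rw [Nat.card_units, natCard_eq_pow_natDegree hf.ne_zero]
    exact (orderOf_le_of_pow_eq_one hn (Units.pow_ofPowEqOne hroot hn.ne')).trans_lt hn_lt
  obtain ⟨y, hy⟩ := exists_forall_pow_mul_ne_one_of_orderOf_lt hx
  refine ⟨y, fun k ↦ ⟨(x ^ k * y).ne_zero, fun h ↦ hy k (Units.ext ?_)⟩⟩
  simpa [x] using h

end AdjoinRoot

theorem exists_forall_one_le_natDegree_X_pow_mul_mod {g : (ZMod 2)[X]}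
    (hg : Irreducible g) {n : ℕ} (hn : 0 < n) (hn_lt : n < 2 ^ g.natDegree - 1)
    (hdvd : g ∣ X ^ n - 1) :
    ∃ u : (ZMod 2)[X], u ≠ 0 ∧ u.natDegree < g.natDegree ∧
      ∀ k : ℕ, 1 ≤ (X ^ k * u % g).natDegree := by
  obtain ⟨y, hy⟩ := AdjoinRoot.exists_forall_root_pow_mul_ne_zero_ne_one hg hn
    (by rwa [Nat.card_zmod]) hdvd
  obtain ⟨p, rfl⟩ := AdjoinRoot.mk_surjective y
  refine ⟨p % g, fun hp ↦ ?_, natDegree_mod_lt p hg.natDegree_pos.ne', fun k ↦ ?_⟩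
  · simpa [← AdjoinRoot.mk_mod, hp] using (hy 0).1
  refine AdjoinRoot.one_le_natDegree_mod_of_mk_notMem_range fun ⟨c, hc⟩ ↦ ?_
  rw [map_mul, map_pow, AdjoinRoot.mk_X, AdjoinRoot.mk_mod] at hc
  obtain rfl | rfl := (by decide : ∀ c : ZMod 2, c = 0 ∨ c = 1) c
  · exact (hy k).1 (hc.symm.trans (map_zero _))
  · exact (hy k).2 (hc.symm.trans (map_one _))

section BurstCovering

variable {F : Type*} [Field F]

noncomputable def burstCoveringRadius (G : F[X]) : ℕ :=
  sSup {v : ℕ | ∃ f : F[X], f ≠ 0 ∧ f.natDegree < G.natDegree ∧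
    v = sInf {w : ℕ | ∃ k : ℕ, w = ((X ^ k * f) % G).natDegree + 1}}

theorem le_burstCoveringRadius {G f : F[X]} (hf : f ≠ 0) (hfG : f.natDegree < G.natDegree)
    {m : ℕ} (hm : ∀ k : ℕ, m ≤ (X ^ k * f % G).natDegree + 1) : m ≤ burstCoveringRadius G := by
  rw [burstCoveringRadius]
  refine le_csSup_of_le (bddAbove_def.mpr ⟨G.natDegree, ?_⟩) ⟨f, hf, hfG, rfl⟩
    (le_csInf ⟨_, 0, rfl⟩ (by rintro _ ⟨k, rfl⟩; exact hm k))
  rintro _ ⟨f', -, hf'G, rfl⟩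
  refine csInf_le_of_le (OrderBot.bddBelow _) ⟨0, rfl⟩ ?_
  rw [pow_zero, one_mul, (mod_eq_self_iff (ne_zero_of_natDegree_gt hf'G)).mpr
    (degree_lt_degree hf'G)]
  omega

end BurstCovering

theorem stmt14_general (e r : ℕ) (he : 0 < e)
    (g : Fin e → Polynomial (ZMod 2))
    (hirr : ∀ i, Irreducible (g i))
    (G : Polynomial (ZMod 2)) (hG : G = ∏ i : Fin e, g i)
    (hr : G.natDegree = r)
    (hnonprim : ∃ n₀ : ℕ, 0 < n₀ ∧ n₀ < 2 ^ (g ⟨0, he⟩).natDegree - 1 ∧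
      g ⟨0, he⟩ ∣ X ^ n₀ - 1)
    (b : ℕ)
    (hb : b = sSup {v : ℕ | ∃ f : Polynomial (ZMod 2), f ≠ 0 ∧ f.natDegree < r ∧
      v = sInf {w : ℕ | ∃ k : ℕ, w = ((X ^ k * f) % G).natDegree + 1}}) :
    b ≥ r - (g ⟨0, he⟩).natDegree + 2 := by
  subst hr hb
  obtain ⟨n₀, hn₀, hn₀_lt, hdvd₀⟩ := hnonprim
  obtain ⟨u, hu, hu_deg, hu_mod⟩ :=
    exists_forall_one_le_natDegree_X_pow_mul_mod (hirr _) hn₀ hn₀_lt hdvd₀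
  set h := ∏ i ∈ Finset.univ.erase ⟨0, he⟩, g i
  have hh : h ≠ 0 := Finset.prod_ne_zero_iff.mpr fun i _ ↦ (hirr i).ne_zero
  have hGh : G = h * g ⟨0, he⟩ := by
    rw [hG, mul_comm, Finset.mul_prod_erase _ _ (Finset.mem_univ _)]
  have hG_deg := natDegree_mul hh (hirr ⟨0, he⟩).ne_zero
  rw [hGh]
  refine le_burstCoveringRadius (mul_ne_zero hh hu) ?_ fun k ↦ ?_
  · rw [natDegree_mul hh hu]
    omega
  · have hk := hu_mod k
    rw [mul_left_comm, mul_mod_mul_left, natDegree_mul hh (ne_zero_of_natDegree_gt hk)]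
    omega

/-- If the minimum-degree irreducible factor `g 0` (of degree `d₁`) of the
squarefree generator polynomial `G` of a binary cyclic code is not primitive
(i.e. `g 0` divides `X^n₀ - 1` for some `0 < n₀ < 2^d₁ - 1`), then the
burst-covering radius satisfies `b ≥ r - d₁ + 2`. -/
theorem stmt14 (n e r : ℕ) (hn : 0 < n) (he : 0 < e)
    (g : Fin e → Polynomial (ZMod 2))
    (hirr : ∀ i, Irreducible (g i)) (hinj : Function.Injective g)
    (hmin : ∀ i : Fin e, (g ⟨0, he⟩).natDegree ≤ (g i).natDegree)
    (G : Polynomial (ZMod 2)) (hG : G = ∏ i : Fin e, g i)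
    (hr : G.natDegree = r) (hdvd : G ∣ X ^ n - 1)
    (hnonprim : ∃ n₀ : ℕ, 0 < n₀ ∧ n₀ < 2 ^ (g ⟨0, he⟩).natDegree - 1 ∧
      g ⟨0, he⟩ ∣ X ^ n₀ - 1)
    (b : ℕ)
    (hb : b = sSup {v : ℕ | ∃ f : Polynomial (ZMod 2), f ≠ 0 ∧ f.natDegree < r ∧
      v = sInf {w : ℕ | ∃ k : ℕ, w = ((X ^ k * f) % G).natDegree + 1}}) :
    b ≥ r - (g ⟨0, he⟩).natDegree + 2 :=
  stmt14_general e r he g hirr G hG hr hnonprim b hb
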